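/- Let Z = (Z_1,…,Z_d) have independent Weibull components with P(Z_i ≤ x) = 1 - exp(-(x/λ_i)^β) for x>0, where λ_i > 0 and 0 < β < α. Then E[ max_{1≤i≤d} (Z_i/x_i)^α ] = Γ(1 + α/β) Σ_{∅ ≠ J ⊂ {1,…,d}} (-1)^{|J|+1} ( Σ_{j∈J} (x_j/λ_j)^β )^{-α/β} for all x ∈ (0,∞)^d. -/

import Mathlib

/-!
Since `(Z_i / x_i)^α ≤ t` iff `Z_i ≤ x_i t^{1/α}`, independence gives
`P(max_i (Z_i / x_i)^α ≤ t) = ∏_i (1 - exp (-c_i t^p))` with `c_i = (x_i / λ_i)^β` and `p = β / α`.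
Expanding one minus this product by inclusion–exclusion turns the tail `P(max > t)` into
`∑_{J ≠ ∅} (-1)^{|J|+1} exp (-(∑_{j ∈ J} c_j) t^p)`. The layer-cake formula
`E[Y] = ∫_0^∞ P(Y > t) dt` and `∫_0^∞ exp (-C t^p) dt = C^{-1/p} Γ(1 + 1/p)` finish the computation.
-/

open MeasureTheory ProbabilityTheory Real Set

theorem Finset.one_sub_prod_one_sub {ι R : Type*} [CommRing R] (s : Finset ι) (e : ι → R) :
    1 - ∏ i ∈ s, (1 - e i) =
      ∑ J ∈ s.powerset.filter (fun J => J.Nonempty), (-1) ^ (J.card + 1) * ∏ j ∈ J, e j := by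
  classical
  have hempty : s.powerset.filter (fun J => ¬J.Nonempty) = {∅} := by
    ext J; simp +contextual [Finset.not_nonempty_iff_eq_empty]
  rw [Finset.prod_sub (fun _ => 1) e s,
    ← Finset.sum_filter_add_sum_filter_not s.powerset (·.Nonempty), hempty]
  simp [pow_succ, ← Finset.sum_neg_distrib]

section ExpRpow

variable {ι : Type*} (s : Finset ι) {c : ι → ℝ} {p : ℝ}

theorem one_sub_prod_one_sub_exp_neg (c : ι → ℝ) (u : ℝ) :
    1 - ∏ i ∈ s, (1 - exp (-(c i * u))) =
      ∑ J ∈ s.powerset.filter (fun J => J.Nonempty),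
        (-1) ^ (J.card + 1) * exp (-(∑ j ∈ J, c j) * u) := by
  rw [Finset.one_sub_prod_one_sub]
  refine Finset.sum_congr rfl fun J _ => ?_
  rw [← exp_sum, neg_mul, Finset.sum_mul, ← Finset.sum_neg_distrib]

theorem one_sub_prod_one_sub_exp_neg_nonneg (hc : ∀ i ∈ s, 0 ≤ c i) {u : ℝ} (hu : 0 ≤ u) :
    0 ≤ 1 - ∏ i ∈ s, (1 - exp (-(c i * u))) := by
  refine sub_nonneg.2 (Finset.prod_le_one (fun i hi => ?_) fun i _ => sub_le_self _ (exp_pos _).le)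
  exact sub_nonneg.2 (exp_le_one_iff.2 (neg_nonpos.2 (mul_nonneg (hc i hi) hu)))

theorem integrableOn_exp_neg_mul_rpow (hp : 0 < p) {b : ℝ} (hb : 0 < b) :
    IntegrableOn (fun t : ℝ => exp (-b * t ^ p)) (Ioi 0) := by
  simpa using integrableOn_rpow_mul_exp_neg_mul_rpow neg_one_lt_zero hp hb

variable {s}

theorem sum_pos_of_mem_powerset_nonempty (hc : ∀ i ∈ s, 0 < c i) {J : Finset ι}
    (hJ : J ∈ s.powerset.filter (fun J => J.Nonempty)) : 0 < ∑ j ∈ J, c j := by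
  rw [Finset.mem_filter, Finset.mem_powerset] at hJ
  exact Finset.sum_pos (fun j hj => hc j (hJ.1 hj)) hJ.2

theorem integrableOn_one_sub_prod_one_sub_exp_neg_mul_rpow (hc : ∀ i ∈ s, 0 < c i) (hp : 0 < p) :
    IntegrableOn (fun t => 1 - ∏ i ∈ s, (1 - exp (-(c i * t ^ p)))) (Ioi 0) := by
  simp_rw [one_sub_prod_one_sub_exp_neg]
  exact integrable_finsetSum _ fun J hJ =>
    (integrableOn_exp_neg_mul_rpow hp (sum_pos_of_mem_powerset_nonempty hc hJ)).const_mul _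

theorem integral_one_sub_prod_one_sub_exp_neg_mul_rpow (hc : ∀ i ∈ s, 0 < c i) (hp : 0 < p) :
    ∫ t in Ioi 0, 1 - ∏ i ∈ s, (1 - exp (-(c i * t ^ p))) =
      Gamma (1 / p + 1) * ∑ J ∈ s.powerset.filter (fun J => J.Nonempty),
        (-1) ^ (J.card + 1) * (∑ j ∈ J, c j) ^ (-1 / p) := by
  simp_rw [one_sub_prod_one_sub_exp_neg]
  rw [integral_finsetSum _ fun J hJ =>
    (integrableOn_exp_neg_mul_rpow hp (sum_pos_of_mem_powerset_nonempty hc hJ)).const_mul _,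
    Finset.mul_sum]
  refine Finset.sum_congr rfl fun J hJ => ?_
  rw [integral_const_mul, integral_exp_neg_mul_rpow hp (sum_pos_of_mem_powerset_nonempty hc hJ)]
  ring

end ExpRpow

theorem ENNReal.one_sub_prod_ofReal {ι : Type*} (s : Finset ι) {a : ι → ℝ}
    (ha : ∀ i ∈ s, 0 ≤ a i) :
    1 - ∏ i ∈ s, ENNReal.ofReal (a i) = ENNReal.ofReal (1 - ∏ i ∈ s, a i) := by
  rw [ENNReal.ofReal_sub _ (Finset.prod_nonneg ha), ENNReal.ofReal_one,
    ENNReal.ofReal_prod_of_nonneg ha]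

-- `0 ≤ a` is needed for an empty index type, where `⨆ i, f i = 0`.
theorem Real.iSup_le_iff_of_finite {ι : Type*} [Finite ι] {f : ι → ℝ} {a : ℝ} (ha : 0 ≤ a) :
    ⨆ i, f i ≤ a ↔ ∀ i, f i ≤ a :=
  ⟨fun h i => (le_ciSup (Finite.bddAbove_range f) i).trans h, fun h => Real.iSup_le h ha⟩

section Probability

variable {Ω : Type*} [MeasurableSpace Ω] {μ : Measure Ω}

namespace ProbabilityTheory.iIndepFun

variable {ι : Type*} [Fintype ι] {Y : ι → Ω → ℝ}

theorem measure_iSup_le (hY : iIndepFun Y μ) {t : ℝ} (ht : 0 ≤ t) :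
    μ {ω | ⨆ i, Y i ω ≤ t} = ∏ i, μ {ω | Y i ω ≤ t} := by
  have hinter : {ω | ⨆ i, Y i ω ≤ t} = ⋂ i, Y i ⁻¹' Iic t := by
    ext ω; simp [Real.iSup_le_iff_of_finite ht]
  rw [hinter, hY.meas_iInter fun i => ⟨Iic t, measurableSet_Iic, rfl⟩]
  rfl

theorem measure_lt_iSup [IsProbabilityMeasure μ] (hYm : ∀ i, Measurable (Y i))
    (hY : iIndepFun Y μ) {t : ℝ} (ht : 0 ≤ t) :
    μ {ω | t < ⨆ i, Y i ω} = 1 - ∏ i, μ {ω | Y i ω ≤ t} := by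
  have hmeas : MeasurableSet {ω | ⨆ i, Y i ω ≤ t} :=
    measurableSet_le (Measurable.iSup hYm) measurable_const
  rw [← hY.measure_iSup_le ht, ← prob_compl_eq_one_sub hmeas]
  congr 1
  ext ω
  simp

end ProbabilityTheory.iIndepFun

theorem lintegral_ofReal_eq_ofReal_setIntegral_of_tail {g : Ω → ℝ} (hg : AEMeasurable g μ)
    (hg0 : 0 ≤ᵐ[μ] g) {F : ℝ → ℝ} (hF : IntegrableOn F (Ioi 0)) (hF0 : ∀ t ∈ Ioi 0, 0 ≤ F t)
    (htail : ∀ t ∈ Ioi 0, μ {ω | t < g ω} = ENNReal.ofReal (F t)) :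
    ∫⁻ ω, ENNReal.ofReal (g ω) ∂μ = ENNReal.ofReal (∫ t in Ioi 0, F t) := by
  rw [lintegral_eq_lintegral_meas_lt μ hg0 hg, setLIntegral_congr_fun measurableSet_Ioi htail,
    ofReal_integral_eq_lintegral_ofReal hF ((ae_restrict_iff' measurableSet_Ioi).mpr
      (ae_of_all _ hF0))]

theorem measure_rpow_div_le_of_weibull {Z : Ω → ℝ} (hZ : ∀ ω, 0 < Z ω) {lam β : ℝ}
    (hlam : 0 < lam)
    (hcdf : ∀ y : ℝ, 0 < y → μ {ω | Z ω ≤ y} = ENNReal.ofReal (1 - exp (-(y / lam) ^ β)))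
    {α x t : ℝ} (hα : 0 < α) (hx : 0 < x) (ht : 0 < t) :
    μ {ω | (Z ω / x) ^ α ≤ t} = ENNReal.ofReal (1 - exp (-((x / lam) ^ β * t ^ (β / α)))) := by
  have hset : {ω | (Z ω / x) ^ α ≤ t} = {ω | Z ω ≤ x * t ^ α⁻¹} := Set.ext fun ω => by
    show (Z ω / x) ^ α ≤ t ↔ Z ω ≤ x * t ^ α⁻¹
    rw [← le_rpow_inv_iff_of_pos (div_pos (hZ ω) hx).le ht.le hα, div_le_iff₀' hx]
  rw [hset, hcdf _ (by positivity), mul_div_right_comm,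
    mul_rpow (div_pos hx hlam).le (by positivity), ← rpow_mul ht.le, inv_mul_eq_div]

theorem measure_lt_iSup_rpow_div_of_weibull [IsProbabilityMeasure μ] {ι : Type*} [Fintype ι]
    {Z : Ω → ι → ℝ} (hZ : ∀ i, Measurable fun ω => Z ω i) (hZpos : ∀ ω i, 0 < Z ω i)
    (hindep : iIndepFun (fun i ω => Z ω i) μ) {lam : ι → ℝ} (hlam : ∀ i, 0 < lam i) {β : ℝ}
    (hcdf : ∀ i, ∀ y : ℝ, 0 < y →
      μ {ω | Z ω i ≤ y} = ENNReal.ofReal (1 - exp (-(y / lam i) ^ β)))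
    {α : ℝ} (hα : 0 < α) {x : ι → ℝ} (hx : ∀ i, 0 < x i) {t : ℝ} (ht : 0 < t) :
    μ {ω | t < ⨆ i, (Z ω i / x i) ^ α} =
      ENNReal.ofReal (1 - ∏ i, (1 - exp (-((x i / lam i) ^ β * t ^ (β / α))))) := by
  have hmeas : ∀ i, Measurable fun ω => (Z ω i / x i) ^ α :=
    fun i => ((hZ i).div_const _).pow_const _
  have hY : iIndepFun (fun i ω => (Z ω i / x i) ^ α) μ :=
    hindep.comp (fun i z => (z / x i) ^ α) fun i => by fun_prop
  rw [hY.measure_lt_iSup hmeas ht.le, Finset.prod_congr rfl fun i _ =>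
    measure_rpow_div_le_of_weibull (fun ω => hZpos ω i) (hlam i) (hcdf i) hα (hx i) ht]
  refine ENNReal.one_sub_prod_ofReal _ fun i _ => sub_nonneg.2 (exp_le_one_iff.2 ?_)
  have := hx i; have := hlam i
  exact neg_nonpos.2 (by positivity)

end Probability

theorem weibull_tail_function
    {Ω : Type*} [MeasurableSpace Ω] (μ : Measure Ω) [IsProbabilityMeasure μ]
    {d : ℕ} (lam : Fin d → ℝ) (hlam : ∀ i, 0 < lam i)
    (α β : ℝ) (hβ : 0 < β) (hβα : β < α)
    (Z : Ω → Fin d → ℝ) (hZ : ∀ i, Measurable fun ω => Z ω i)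
    (hZpos : ∀ ω i, 0 < Z ω i)
    (hindep : ProbabilityTheory.iIndepFun
      (fun i ω => Z ω i) μ)
    (hcdf : ∀ i, ∀ x : ℝ, 0 < x →
      μ {ω | Z ω i ≤ x} = ENNReal.ofReal (1 - Real.exp (-(x / lam i) ^ β)))
    (x : Fin d → ℝ) (hx : ∀ i, 0 < x i) :
    ∫⁻ ω, ENNReal.ofReal (⨆ i, (Z ω i / x i) ^ α) ∂μ =
      ENNReal.ofReal
        (Real.Gamma (1 + α / β) *
          ∑ J ∈ Finset.univ.powerset.filter (fun J : Finset (Fin d) => J.Nonempty),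
            (-1 : ℝ) ^ (J.card + 1) * (∑ j ∈ J, (x j / lam j) ^ β) ^ (-(α / β))) := by
  have hα : 0 < α := hβ.trans hβα
  have hp : 0 < β / α := div_pos hβ hα
  have hc : ∀ i ∈ Finset.univ, 0 < (x i / lam i) ^ β := fun i _ => by
    have := hx i; have := hlam i; positivity
  have hmax : Measurable fun ω => ⨆ i, (Z ω i / x i) ^ α :=
    Measurable.iSup fun i => ((hZ i).div_const _).pow_const _
  have hmax_nonneg : ∀ ω, 0 ≤ ⨆ i, (Z ω i / x i) ^ α := fun ω =>
    Real.iSup_nonneg fun i => by have := hZpos ω i; have := hx i; positivity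
  rw [lintegral_ofReal_eq_ofReal_setIntegral_of_tail hmax.aemeasurable (ae_of_all _ hmax_nonneg)
    (integrableOn_one_sub_prod_one_sub_exp_neg_mul_rpow hc hp)
    (fun t ht => one_sub_prod_one_sub_exp_neg_nonneg _ (fun i hi => (hc i hi).le)
      (rpow_nonneg (le_of_lt ht) _))
    (fun t ht => measure_lt_iSup_rpow_div_of_weibull hZ hZpos hindep hlam hcdf hα hx ht),
    integral_one_sub_prod_one_sub_exp_neg_mul_rpow hc hp, one_div_div, neg_div, one_div_div,
    add_comm]
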